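/- arXiv:1003.5845 — 7 statements merged into one kernel-verified Lean document; each statement's English description precedes it below -/
import Mathlib

section
/- There exists a constant C depending only on the dimension d such that for every continuously differentiable map b : ℝ^d → ℝ^m and all distinct points x, y ∈ ℝ^d, |b(x) − b(y)| ≤ C ∫_{B(x,y)} |db(z)| (1/|x−z|^{d−1} + 1/|y−z|^{d−1}) dz, where |db(z)| denotes the operator norm of the derivative of b at z and B(x,y) denotes the open ball with center (x+y)/2 and diameter |x−y|. -/
/-!
Averaging the triangle inequality over `B = B(x, y)` gives
`|b x - b y| |B| ≤ ∫_B |b x - b z| + |b y - b z| dz`. For `x` in the closure of an open convex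
set `s ⊆ B(x, δ)`, write `b z - b x` as the integral of `db` along `[x, z]` and substitute
`w = x + t (z - x)`: the Jacobian is `t⁻ᵈ`, `w` stays in `s`, and `|w - x| < t δ`. After
exchanging the integrals, `∫_{|w - x|/δ}^∞ t^(-d-1) dt = δ^d / (d |w - x|^d)` yields
`∫_s |b x - b z| ≤ (δ^d / d) ∫_s |db w| |x - w|^(1-d) dw`; for `B(x, y)` take `δ = |x - y|`.
-/

open MeasureTheory Metric Set Module
open scoped ENNReal

-- Written with `‖z - x‖ = t⁻¹ dist w x`, `w = x + t • (z - x)`, so that the integrand depends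
-- on `z` only through `w`.
lemma ofReal_norm_sub_le_lintegral_fderiv {E F : Type*} [NormedAddCommGroup E]
    [NormedSpace ℝ E] [NormedAddCommGroup F] [NormedSpace ℝ F] [CompleteSpace F] {b : E → F}
    (hb : ContDiff ℝ 1 b) (x z : E) :
    ENNReal.ofReal ‖b x - b z‖ ≤ ∫⁻ t in Ioc (0 : ℝ) 1, ENNReal.ofReal t⁻¹ *
      ENNReal.ofReal (‖fderiv ℝ b (x + t • (z - x))‖ * dist (x + t • (z - x)) x) := by
  have hderiv (t : ℝ) : HasDerivAt (fun s : ℝ ↦ b (x + s • (z - x)))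
      (fderiv ℝ b (x + t • (z - x)) (z - x)) t := by
    have hpath : HasDerivAt (fun s : ℝ ↦ x + s • (z - x)) (z - x) t := by
      simpa using ((hasDerivAt_id t).smul_const (z - x)).const_add x
    exact (hb.differentiable one_ne_zero _).hasFDerivAt.comp_hasDerivAt t hpath
  have hDb : Continuous (fderiv ℝ b) := hb.continuous_fderiv one_ne_zero
  have hbound : Continuous fun t : ℝ ↦ ‖fderiv ℝ b (x + t • (z - x))‖ * ‖z - x‖ := by fun_prop
  have hftc := intervalIntegral.integral_eq_sub_of_hasDerivAt (fun t _ ↦ hderiv t)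
    ((by fun_prop : Continuous fun t : ℝ ↦ fderiv ℝ b (x + t • (z - x)) (z - x)).intervalIntegrable
      0 1)
  simp only [one_smul, zero_smul, add_zero, add_sub_cancel] at hftc
  calc ENNReal.ofReal ‖b x - b z‖
      ≤ ENNReal.ofReal (∫ t in Ioc (0 : ℝ) 1, ‖fderiv ℝ b (x + t • (z - x))‖ * ‖z - x‖) := by
        rw [← intervalIntegral.integral_of_le zero_le_one, norm_sub_rev, ← hftc]
        exact ENNReal.ofReal_le_ofReal <| intervalIntegral.norm_integral_le_of_norm_le
          zero_le_one (ae_of_all _ fun t _ ↦ (fderiv ℝ b _).le_opNorm _)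
          (hbound.intervalIntegrable 0 1)
    _ = ∫⁻ t in Ioc (0 : ℝ) 1, ENNReal.ofReal (‖fderiv ℝ b (x + t • (z - x))‖ * ‖z - x‖) :=
        ofReal_integral_eq_lintegral_ofReal hbound.integrableOn_Ioc
          (ae_of_all _ fun t ↦ by positivity)
    _ = _ := setLIntegral_congr_fun measurableSet_Ioc fun t ht ↦ by
        rw [← ENNReal.ofReal_mul (inv_nonneg.2 ht.1.le), dist_eq_norm, add_sub_cancel_left,
          norm_smul, Real.norm_of_nonneg ht.1.le]
        congr 1
        field_simp [ht.1.ne']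

lemma lintegral_inv_pow_succ_mul_ite {n : ℕ} (hn : n ≠ 0) {a δ : ℝ} (ha : 0 < a) (hδ : 0 < δ)
    (c : ℝ≥0∞) :
    ∫⁻ t, ENNReal.ofReal (t ^ (n + 1))⁻¹ * (if a < t * δ then c else 0)
      = ENNReal.ofReal ((δ / a) ^ n / n) * c := by
  have hind : (fun t : ℝ ↦ ENNReal.ofReal (t ^ (n + 1))⁻¹ * (if a < t * δ then c else 0))
      = (Ioi (a / δ)).indicator fun t ↦ ENNReal.ofReal (t ^ (-(n : ℝ) - 1)) * c := by
    ext t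
    simp only [indicator_apply, mem_Ioi, div_lt_iff₀ hδ]
    split_ifs with h
    · have ht : 0 < t := pos_of_mul_pos_left (ha.trans h) hδ.le
      rw [show -(n : ℝ) - 1 = -((n + 1 : ℕ) : ℝ) by push_cast; ring, Real.rpow_neg ht.le,
        Real.rpow_natCast]
    · rw [mul_zero]
  have hq : 0 < a / δ := div_pos ha hδ
  have hexp : -(n : ℝ) - 1 < -1 := by linarith [(by positivity : (0 : ℝ) < n)]
  rw [hind, lintegral_indicator measurableSet_Ioi, lintegral_mul_const _ (by fun_prop),
    ← ofReal_integral_eq_lintegral_ofReal (integrableOn_Ioi_rpow_of_lt hexp hq)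
      ((ae_restrict_iff' measurableSet_Ioi).2 (ae_of_all _ fun t ht ↦
        Real.rpow_nonneg (hq.trans ht).le _)), integral_Ioi_rpow_of_lt hexp hq]
  congr 2
  rw [sub_add_cancel, Real.rpow_neg hq.le, ← Real.inv_rpow hq.le, inv_div, Real.rpow_natCast]
  ring

lemma setLIntegral_Ioc_inv_pow_mul_ite_le {n : ℕ} (hn : n ≠ 0) {a δ : ℝ} (ha : 0 ≤ a)
    (hδ : 0 < δ) (D : ℝ) :
    ∫⁻ t in Ioc (0 : ℝ) 1, ENNReal.ofReal (t ^ (n + 1))⁻¹ *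
        (if a < t * δ then ENNReal.ofReal (D * a) else 0)
      ≤ ENNReal.ofReal (δ ^ n / n) * ENNReal.ofReal (D * (1 / a ^ (n - 1))) := by
  rcases ha.eq_or_lt with rfl | ha
  · simp
  calc _ ≤ ∫⁻ t, ENNReal.ofReal (t ^ (n + 1))⁻¹ *
        (if a < t * δ then ENNReal.ofReal (D * a) else 0) := setLIntegral_le_lintegral _ _
    _ = ENNReal.ofReal ((δ / a) ^ n / n) * ENNReal.ofReal (D * a) :=
        lintegral_inv_pow_succ_mul_ite hn ha hδ _
    _ = _ := by
        rw [← ENNReal.ofReal_mul (by positivity), ← ENNReal.ofReal_mul (by positivity)]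
        obtain ⟨k, rfl⟩ := Nat.exists_eq_succ_of_ne_zero hn
        rw [Nat.succ_sub_one, div_pow, pow_succ a]
        field_simp

lemma norm_sub_mul_measureReal_le {α F : Type*} [MeasurableSpace α] [NormedAddCommGroup F]
    {μ : Measure α} {s : Set α} (hs : μ s ≠ ∞) {f : α → F} (hf : IntegrableOn f s μ) (u v : F) :
    ‖u - v‖ * μ.real s ≤ ∫ z in s, ‖u - f z‖ ∂μ + ∫ z in s, ‖v - f z‖ ∂μ := by
  have : IsFiniteMeasure (μ.restrict s) := isFiniteMeasure_restrict.2 hs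
  have hu : IntegrableOn (fun z ↦ ‖u - f z‖) s μ := ((integrable_const u).sub hf).norm
  have hv : IntegrableOn (fun z ↦ ‖v - f z‖) s μ := ((integrable_const v).sub hf).norm
  rw [← integral_add hu hv, mul_comm, ← smul_eq_mul, ← setIntegral_const]
  refine setIntegral_mono (integrable_const _) (hu.add hv) fun z ↦ ?_
  simpa only [dist_eq_norm] using dist_triangle_right u v (f z)

section Haar

variable {E : Type*} [NormedAddCommGroup E] [NormedSpace ℝ E] [FiniteDimensional ℝ E]
  [MeasurableSpace E] [BorelSpace E] (μ : Measure E) [μ.IsAddHaarMeasure]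

lemma lintegral_comp_homothety {f : E → ℝ≥0∞} (hf : Measurable f) (x : E) {t : ℝ} (ht : t ≠ 0) :
    ∫⁻ z, f (x + t • (z - x)) ∂μ = ENNReal.ofReal |(t ^ finrank ℝ E)⁻¹| * ∫⁻ z, f z ∂μ := by
  calc ∫⁻ z, f (x + t • (z - x)) ∂μ = ∫⁻ w, f (x + t • w) ∂μ :=
        lintegral_sub_right_eq_self (fun w ↦ f (x + t • w)) x
    _ = ∫⁻ w, f (x + w) ∂(Measure.map (t • ·) μ) :=
        (lintegral_map (hf.comp (measurable_const_add x)) (measurable_const_smul t)).symm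
    _ = _ := by
        rw [Measure.map_addHaar_smul μ ht, lintegral_smul_measure, lintegral_add_left_eq_self,
          smul_eq_mul]

lemma locallyIntegrable_inv_norm_sub_pow [Nontrivial E] (x : E) :
    LocallyIntegrable (fun z ↦ 1 / ‖x - z‖ ^ (finrank ℝ E - 1)) μ := by
  have hzero : LocallyIntegrable (fun z : E ↦ 1 / ‖z‖ ^ (finrank ℝ E - 1)) μ := by
    refine locallyIntegrable_of_norm_le_rpow finrank_pos (C := 1)
      (α := ((finrank ℝ E - 1 : ℕ) : ℝ)) (by exact_mod_cast Nat.sub_lt finrank_pos one_pos)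
      (ae_of_all _ fun z ↦ ?_)
      (measurable_const.div (continuous_norm.pow _).measurable).aestronglyMeasurable
    rw [one_mul, Real.rpow_neg (norm_nonneg _), Real.rpow_natCast, Real.norm_eq_abs,
      abs_of_nonneg (by positivity), one_div]
  have hmap := (locallyIntegrable_map_homeomorph (μ := μ) (Homeomorph.subRight x)).1
    (by rwa [Homeomorph.coe_subRight, map_sub_right_eq_self])
  simpa only [Function.comp_def, Homeomorph.coe_subRight, norm_sub_rev x] using hmap

lemma setLIntegral_comp_homothety_le {s : Set E} (hs : Convex ℝ s) (hso : IsOpen s) {x : E}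
    (hx : x ∈ closure s) {δ : ℝ} (hsδ : s ⊆ ball x δ) {g : E → ℝ≥0∞} (hg : Measurable g)
    {t : ℝ} (ht₀ : 0 < t) (ht₁ : t ≤ 1) :
    ∫⁻ z in s, g (x + t • (z - x)) ∂μ
      ≤ ENNReal.ofReal (t ^ finrank ℝ E)⁻¹ * ∫⁻ w in s, (ball x (t * δ)).indicator g w ∂μ := by
  set A := s ∩ ball x (t * δ)
  have hA : MeasurableSet A := hso.measurableSet.inter measurableSet_ball
  have hmaps (z : E) (hz : z ∈ s) : x + t • (z - x) ∈ A := by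
    refine ⟨?_, ?_⟩
    · have hcombo := hs.combo_closure_interior_mem_interior hx (hso.interior_eq.symm ▸ hz)
        (sub_nonneg.2 ht₁) ht₀ (sub_add_cancel 1 t)
      rw [hso.interior_eq] at hcombo
      convert hcombo using 1
      module
    · rw [mem_ball, dist_eq_norm, add_sub_cancel_left, norm_smul, Real.norm_of_nonneg ht₀.le]
      exact mul_lt_mul_of_pos_left (mem_ball_iff_norm.1 (hsδ hz)) ht₀
  calc ∫⁻ z in s, g (x + t • (z - x)) ∂μ = ∫⁻ z in s, A.indicator g (x + t • (z - x)) ∂μ :=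
        setLIntegral_congr_fun hso.measurableSet fun z hz ↦ (indicator_of_mem (hmaps z hz) g).symm
    _ ≤ ∫⁻ z, A.indicator g (x + t • (z - x)) ∂μ := setLIntegral_le_lintegral _ _
    _ = ENNReal.ofReal (t ^ finrank ℝ E)⁻¹ * ∫⁻ w in A, g w ∂μ := by
        rw [lintegral_comp_homothety μ (hg.indicator hA) x ht₀.ne', abs_of_pos (by positivity),
          lintegral_indicator hA]
    _ = _ := by
        rw [lintegral_indicator measurableSet_ball, Measure.restrict_restrict measurableSet_ball,
          inter_comm]

variable {F : Type*} [NormedAddCommGroup F] [NormedSpace ℝ F]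

lemma integrableOn_norm_fderiv_mul_inv_norm_sub_pow [Nontrivial E] {b : E → F}
    (hb : ContDiff ℝ 1 b) (x : E) {s : Set E} (hs : Bornology.IsBounded s) :
    IntegrableOn (fun z ↦ ‖fderiv ℝ b z‖ * (1 / ‖x - z‖ ^ (finrank ℝ E - 1))) s μ :=
  (((locallyIntegrable_inv_norm_sub_pow μ x).integrableOn_isCompact
    hs.isCompact_closure).continuousOn_mul (hb.continuous_fderiv one_ne_zero).norm.continuousOn
    hs.isCompact_closure).mono_set subset_closure

theorem lintegral_norm_sub_le [Nontrivial E] [CompleteSpace F] {b : E → F}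
    (hb : ContDiff ℝ 1 b) {s : Set E} (hs : Convex ℝ s) (hso : IsOpen s) {x : E}
    (hx : x ∈ closure s) {δ : ℝ} (hsδ : s ⊆ ball x δ) :
    ∫⁻ z in s, ENNReal.ofReal ‖b x - b z‖ ∂μ
      ≤ ENNReal.ofReal (δ ^ finrank ℝ E / finrank ℝ E) *
        ∫⁻ z in s, ENNReal.ofReal (‖fderiv ℝ b z‖ * (1 / ‖x - z‖ ^ (finrank ℝ E - 1))) ∂μ := by
  set d := finrank ℝ E
  have hDb : Continuous fun w ↦ ‖fderiv ℝ b w‖ := (hb.continuous_fderiv one_ne_zero).norm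
  set G : E → ℝ≥0∞ := fun w ↦ ENNReal.ofReal (‖fderiv ℝ b w‖ * dist w x)
  have hGm : Measurable G := by fun_prop
  set K : ℝ → E → ℝ≥0∞ := fun t w ↦ ENNReal.ofReal (t ^ (d + 1))⁻¹ *
    if dist w x < t * δ then G w else 0 with hK
  have hKm : Measurable (Function.uncurry K) :=
    (by fun_prop : Measurable fun p : ℝ × E ↦ ENNReal.ofReal (p.1 ^ (d + 1))⁻¹).mul
      (Measurable.ite (measurableSet_lt (by fun_prop) (by fun_prop)) (hGm.comp measurable_snd)
        measurable_const)
  have hstep (t : ℝ) (ht : t ∈ Ioc (0 : ℝ) 1) :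
      ENNReal.ofReal t⁻¹ * ∫⁻ z in s, G (x + t • (z - x)) ∂μ ≤ ∫⁻ w in s, K t w ∂μ := by
    classical
    obtain ⟨ht₀, ht₁⟩ := ht
    calc ENNReal.ofReal t⁻¹ * ∫⁻ z in s, G (x + t • (z - x)) ∂μ
        ≤ ENNReal.ofReal t⁻¹ * (ENNReal.ofReal (t ^ d)⁻¹ *
            ∫⁻ w in s, (ball x (t * δ)).indicator G w ∂μ) := by
          gcongr
          exact setLIntegral_comp_homothety_le μ hs hso hx hsδ hGm ht₀ ht₁
      _ = ∫⁻ w in s, K t w ∂μ := by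
          rw [← mul_assoc, ← ENNReal.ofReal_mul (by positivity),
            ← lintegral_const_mul' _ _ ENNReal.ofReal_ne_top]
          refine lintegral_congr fun w ↦ ?_
          simp only [hK, indicator_apply, mem_ball, pow_succ, mul_inv, mul_comm t⁻¹]
  calc ∫⁻ z in s, ENNReal.ofReal ‖b x - b z‖ ∂μ
      ≤ ∫⁻ z in s, (∫⁻ t in Ioc (0 : ℝ) 1, ENNReal.ofReal t⁻¹ * G (x + t • (z - x))) ∂μ :=
        lintegral_mono fun z ↦ ofReal_norm_sub_le_lintegral_fderiv hb x z
    _ = ∫⁻ t in Ioc (0 : ℝ) 1, ENNReal.ofReal t⁻¹ * (∫⁻ z in s, G (x + t • (z - x)) ∂μ) := by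
        rw [lintegral_lintegral_swap (by fun_prop : Measurable _).aemeasurable]
        simp_rw [lintegral_const_mul' _ _ ENNReal.ofReal_ne_top]
    _ ≤ ∫⁻ t in Ioc (0 : ℝ) 1, (∫⁻ w in s, K t w ∂μ) :=
        setLIntegral_mono hKm.lintegral_prod_right' hstep
    _ = ∫⁻ w in s, (∫⁻ t in Ioc (0 : ℝ) 1, K t w) ∂μ := lintegral_lintegral_swap hKm.aemeasurable
    _ ≤ ∫⁻ w in s, ENNReal.ofReal (δ ^ d / d) *
          ENNReal.ofReal (‖fderiv ℝ b w‖ * (1 / ‖x - w‖ ^ (d - 1))) ∂μ :=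
        setLIntegral_mono' hso.measurableSet fun w hw ↦
          (setLIntegral_Ioc_inv_pow_mul_ite_le finrank_pos.ne' dist_nonneg
            (dist_nonneg.trans_lt (hsδ hw)) ‖fderiv ℝ b w‖).trans_eq (by rw [dist_eq_norm'])
    _ = _ := lintegral_const_mul' _ _ ENNReal.ofReal_ne_top

theorem setIntegral_norm_sub_le [Nontrivial E] [CompleteSpace F] {b : E → F}
    (hb : ContDiff ℝ 1 b) {s : Set E} (hs : Convex ℝ s) (hso : IsOpen s) {x : E}
    (hx : x ∈ closure s) {δ : ℝ} (hsδ : s ⊆ ball x δ) :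
    ∫ z in s, ‖b x - b z‖ ∂μ
      ≤ δ ^ finrank ℝ E / finrank ℝ E *
        ∫ z in s, ‖fderiv ℝ b z‖ * (1 / ‖x - z‖ ^ (finrank ℝ E - 1)) ∂μ := by
  rcases s.eq_empty_or_nonempty with rfl | ⟨z, hz⟩
  · simp
  have hδ : 0 < δ := dist_nonneg.trans_lt (hsδ hz)
  rw [integral_eq_lintegral_of_nonneg_ae (ae_of_all _ fun _ ↦ norm_nonneg _)
    (by fun_prop : Continuous fun z ↦ ‖b x - b z‖).aestronglyMeasurable]
  refine ENNReal.toReal_le_of_le_ofReal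
    (mul_nonneg (by positivity) (setIntegral_nonneg hso.measurableSet fun _ _ ↦ by positivity)) ?_
  rw [ENNReal.ofReal_mul (by positivity), ofReal_integral_eq_lintegral_ofReal
    (integrableOn_norm_fderiv_mul_inv_norm_sub_pow μ hb x (isBounded_ball.subset hsδ))
    (ae_of_all _ fun _ ↦ by positivity)]
  exact lintegral_norm_sub_le μ hb hs hso hx hsδ

theorem norm_sub_mul_measureReal_ball_le [Nontrivial E] [CompleteSpace F] {b : E → F}
    (hb : ContDiff ℝ 1 b) {c x y : E} {r : ℝ} (hr : 0 < r) (hx : x ∈ closedBall c r)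
    (hy : y ∈ closedBall c r) :
    ‖b x - b y‖ * μ.real (ball c r)
      ≤ (2 * r) ^ finrank ℝ E / finrank ℝ E * ∫ z in ball c r, ‖fderiv ℝ b z‖ *
        (1 / ‖x - z‖ ^ (finrank ℝ E - 1) + 1 / ‖y - z‖ ^ (finrank ℝ E - 1)) ∂μ := by
  have hcore (p : E) (hp : p ∈ closedBall c r) := setIntegral_norm_sub_le μ hb (convex_ball c r)
    isOpen_ball (by rwa [closure_ball c hr.ne'])
    (ball_subset_ball' (by rw [dist_comm]; linarith [mem_closedBall.1 hp]) :
      ball c r ⊆ ball p (2 * r))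
  have hint (p : E) :=
    integrableOn_norm_fderiv_mul_inv_norm_sub_pow μ hb p (isBounded_ball (x := c) (r := r))
  have hb_int : IntegrableOn b (ball c r) μ :=
    (hb.continuous.continuousOn.integrableOn_compact (isCompact_closedBall c r)).mono_set
      ball_subset_closedBall
  calc ‖b x - b y‖ * μ.real (ball c r)
      ≤ ∫ z in ball c r, ‖b x - b z‖ ∂μ + ∫ z in ball c r, ‖b y - b z‖ ∂μ :=
        norm_sub_mul_measureReal_le measure_ball_lt_top.ne hb_int (b x) (b y)
    _ ≤ _ := add_le_add (hcore x hx) (hcore y hy)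
    _ = _ := by simp only [← mul_add, ← integral_add (hint x) (hint y)]

theorem norm_sub_le_mul_integral_ball [CompleteSpace F] {b : E → F} (hb : ContDiff ℝ 1 b)
    {x y : E} (hxy : x ≠ y) :
    ‖b x - b y‖ ≤ 2 ^ finrank ℝ E / (finrank ℝ E * μ.real (ball 0 1)) *
      ∫ z in ball (midpoint ℝ x y) (‖x - y‖ / 2), ‖fderiv ℝ b z‖ *
        (1 / ‖x - z‖ ^ (finrank ℝ E - 1) + 1 / ‖y - z‖ ^ (finrank ℝ E - 1)) ∂μ := by
  have : Nontrivial E := nontrivial_of_ne x y hxy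
  set r := ‖x - y‖ / 2
  have hr : 0 < r := half_pos (norm_pos_iff.2 (sub_ne_zero.2 hxy))
  have hx : x ∈ closedBall (midpoint ℝ x y) r := by
    rw [mem_closedBall, dist_left_midpoint, Real.norm_two, dist_eq_norm]
    exact (inv_mul_eq_div _ _).le
  have hy : y ∈ closedBall (midpoint ℝ x y) r := by
    rw [mem_closedBall, dist_right_midpoint, Real.norm_two, dist_eq_norm]
    exact (inv_mul_eq_div _ _).le
  have hω : 0 < μ.real (ball 0 1) :=
    ENNReal.toReal_pos (measure_ball_pos μ 0 one_pos).ne' measure_ball_lt_top.ne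
  have hkey := norm_sub_mul_measureReal_ball_le μ hb hr hx hy
  rw [measureReal_def, Measure.addHaar_ball_of_pos μ _ hr, ENNReal.toReal_mul,
    ENNReal.toReal_ofReal (by positivity), ← measureReal_def, ← le_div_iff₀ (by positivity)]
    at hkey
  refine hkey.trans_eq ?_
  rw [mul_pow]
  field_simp

end Haar

/-- There exists a constant `C` depending only on the dimension `d` such
that for every `C¹` map `b : ℝ^d → ℝ^m` and all distinct points `x, y`,
`|b x - b y| ≤ C ∫_{B(x,y)} |db z| (1/|x-z|^{d-1} + 1/|y-z|^{d-1}) dz`,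
where `B(x,y)` is the open ball of center `(x+y)/2` and diameter `|x-y|`. -/
theorem stmt2 (d : ℕ) (hd : 1 ≤ d) :
    ∃ C > (0 : ℝ), ∀ (m : ℕ)
      (b : EuclideanSpace ℝ (Fin d) → EuclideanSpace ℝ (Fin m)),
      ContDiff ℝ 1 b →
      ∀ x y : EuclideanSpace ℝ (Fin d), x ≠ y →
        ‖b x - b y‖ ≤
          C * ∫ z in Metric.ball (midpoint ℝ x y) (‖x - y‖ / 2),
            ‖fderiv ℝ b z‖ * (1 / ‖x - z‖ ^ (d - 1) + 1 / ‖y - z‖ ^ (d - 1)) := by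
  refine ⟨2 ^ d / (d * volume.real (ball (0 : EuclideanSpace ℝ (Fin d)) 1)), ?_,
    fun m b hb x y hxy ↦ ?_⟩
  · have hω : 0 < volume.real (ball (0 : EuclideanSpace ℝ (Fin d)) 1) :=
      ENNReal.toReal_pos (measure_ball_pos _ 0 one_pos).ne' measure_ball_lt_top.ne
    have hd' : (0 : ℝ) < d := Nat.cast_pos.2 hd
    positivity
  · simpa only [finrank_euclideanSpace_fin] using norm_sub_le_mul_integral_ball volume hb hxy
end

section
/- Let f : ℝ^d → [0,∞] be locally integrable and let Mf(x) = sup_{r>0} r^{−d} ∫_{B(x,r)} f(z) dz denote its (uncentered-normalization) Hardy–Littlewood maximal function. Then for all distinct x, y ∈ ℝ^d, ∫_{B(x,y)} f(z)/|x−z|^{d−1} dz ≤ 2^d |x−y| Mf(x), where B(x,y) denotes the ball with center (x+y)/2 and diameter |x−y|. -/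
open MeasureTheory Metric Set

/-- If `f : ℝ^d → [0,∞]` is locally integrable and
`Mf x = sup_{r>0} r^{-d} ∫_{B(x,r)} f` denotes its maximal function, then for distinct
`x, y`, `∫_{B(x,y)} f(z)/|x-z|^{d-1} dz ≤ 2^d |x-y| Mf(x)`, where `B(x,y)` is the ball
of center `(x+y)/2` and diameter `|x-y|`. -/
theorem stmt4 (d : ℕ) (hd : 1 ≤ d)
    (f : EuclideanSpace ℝ (Fin d) → ENNReal) (hf : Measurable f)
    (hloc : ∀ K : Set (EuclideanSpace ℝ (Fin d)), IsCompact K → ∫⁻ z in K, f z < ⊤)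
    (x y : EuclideanSpace ℝ (Fin d)) (hxy : x ≠ y) :
    ∫⁻ z in Metric.ball (midpoint ℝ x y) (‖x - y‖ / 2),
        f z / ENNReal.ofReal (‖x - z‖ ^ (d - 1)) ≤
      ENNReal.ofReal (2 ^ d * ‖x - y‖) *
        ⨆ (r : ℝ) (_ : 0 < r),
          (∫⁻ z in Metric.ball x r, f z) / ENNReal.ofReal (r ^ d) := by
  set e := d - 1 with he
  have hde : d = e + 1 := (Nat.succ_pred_eq_of_pos hd).symm
  set R := ‖x - y‖ with hR
  have hRpos : 0 < R := by
    rw [hR]; exact norm_sub_pos_iff.mpr hxy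
  set M := ⨆ (r : ℝ) (_ : 0 < r),
      (∫⁻ z in Metric.ball x r, f z) / ENNReal.ofReal (r ^ d) with hM
  -- maximal function bound
  have key : ∀ r : ℝ, 0 < r →
      ∫⁻ z in Metric.ball x r, f z ≤ ENNReal.ofReal (r ^ d) * M := by
    intro r hr
    have h1 : (∫⁻ z in Metric.ball x r, f z) / ENNReal.ofReal (r ^ d) ≤ M :=
      le_iSup₂ (f := fun (r : ℝ) (_ : 0 < r) =>
        (∫⁻ z in Metric.ball x r, f z) / ENNReal.ofReal (r ^ d)) r hr
    have h0 : ENNReal.ofReal (r ^ d) ≠ 0 := by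
      simp [ENNReal.ofReal_eq_zero, not_le]; positivity
    rw [ENNReal.div_le_iff h0 ENNReal.ofReal_ne_top] at h1
    exact h1.trans_eq (mul_comm _ _)
  -- annuli
  set A : ℕ → Set (EuclideanSpace ℝ (Fin d)) :=
    fun k => Metric.ball x (R / 2 ^ k) \ Metric.ball x (R / 2 ^ (k + 1)) with hA
  have hsub : Metric.ball (midpoint ℝ x y) (R / 2) ⊆ ⋃ k, A k := by
    intro z hz
    have hmid : dist x (midpoint ℝ x y) = R / 2 := by
      rw [dist_left_midpoint, dist_eq_norm]
      simp [← hR]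
      ring
    have hz' : dist z (midpoint ℝ x y) < R / 2 := mem_ball.mp hz
    have hzR : dist x z < R := by
      calc dist x z ≤ dist x (midpoint ℝ x y) + dist (midpoint ℝ x y) z :=
            dist_triangle _ _ _
        _ < R / 2 + R / 2 := by
            rw [hmid]; rw [dist_comm]; linarith
        _ = R := by ring
    have hzx : 0 < dist x z := by
      rcases eq_or_ne z x with h | hne
      · exfalso; rw [h, hmid] at hz'; exact lt_irrefl _ hz'
      · exact dist_pos.mpr (Ne.symm hne)
    -- find k
    have hex : ∃ k : ℕ, R / 2 ^ (k + 1) ≤ dist x z := by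
      obtain ⟨n, hn⟩ := exists_pow_lt_of_lt_one (div_pos hzx hRpos) (by norm_num : (1:ℝ)/2 < 1)
      refine ⟨n, ?_⟩
      have : R * (1 / 2) ^ n < dist x z := by
        rw [lt_div_iff₀ hRpos] at hn; linarith [hn]
      have h2 : R / 2 ^ (n + 1) ≤ R / 2 ^ n := by
        apply div_le_div_of_nonneg_left hRpos.le (by positivity)
        exact pow_le_pow_right₀ (by norm_num) (Nat.le_succ n)
      refine h2.trans ?_
      have : R / 2 ^ n = R * (1 / 2) ^ n := by
        rw [div_pow, one_pow]; ring
      linarith [this ▸ ‹R * (1/2)^n < dist x z›]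
    classical
    obtain ⟨k₀, hspec, hmin⟩ : ∃ k, (R / 2 ^ (k + 1) ≤ dist x z) ∧
        ∀ j < k, ¬ (R / 2 ^ (j + 1) ≤ dist x z) :=
      ⟨Nat.find hex, Nat.find_spec hex, fun j hj => Nat.find_min hex hj⟩
    have hin : z ∈ Metric.ball x (R / 2 ^ k₀) := by
      rw [mem_ball, dist_comm]
      rcases k₀ with _ | m
      · simpa using hzR
      · have := hmin m (Nat.lt_succ_self m)
        push_neg at this
        exact this
    refine mem_iUnion.mpr ⟨k₀, hin, ?_⟩
    rw [mem_ball, dist_comm]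
    exact not_lt.mpr hspec
  -- per-annulus bound
  have hAk : ∀ k : ℕ, ∫⁻ z in A k, f z / ENNReal.ofReal (‖x - z‖ ^ e)
      ≤ ENNReal.ofReal (R * 2 ^ e * (2⁻¹ : ℝ) ^ k) * M := by
    intro k
    set r := R / 2 ^ k with hr
    set s := R / 2 ^ (k + 1) with hs
    have hrpos : 0 < r := by positivity
    have hspos : 0 < s := by positivity
    have hsepos : (0:ℝ) < s ^ e := by positivity
    have hstep1 : ∫⁻ z in A k, f z / ENNReal.ofReal (‖x - z‖ ^ e)
        ≤ ∫⁻ z in A k, f z / ENNReal.ofReal (s ^ e) := by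
      apply setLIntegral_mono (hf.div measurable_const)
      intro z hz
      apply ENNReal.div_le_div le_rfl
      apply ENNReal.ofReal_le_ofReal
      apply pow_le_pow_left₀ hspos.le
      have : ¬ dist z x < s := by
        have := hz.2; rwa [mem_ball] at this
      rw [← dist_eq_norm, dist_comm]
      exact not_lt.mp this
    have hstep2 : ∫⁻ z in A k, f z / ENNReal.ofReal (s ^ e)
        = (∫⁻ z in A k, f z) / ENNReal.ofReal (s ^ e) := by
      simp_rw [div_eq_mul_inv]
      exact lintegral_mul_const _ hf
    have hstep3 : (∫⁻ z in A k, f z) / ENNReal.ofReal (s ^ e)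
        ≤ (ENNReal.ofReal (r ^ d) * M) / ENNReal.ofReal (s ^ e) := by
      apply ENNReal.div_le_div _ le_rfl
      calc ∫⁻ z in A k, f z ≤ ∫⁻ z in Metric.ball x r, f z :=
            lintegral_mono_set diff_subset
        _ ≤ ENNReal.ofReal (r ^ d) * M := key r hrpos
    have hstep4 : (ENNReal.ofReal (r ^ d) * M) / ENNReal.ofReal (s ^ e)
        = ENNReal.ofReal (R * 2 ^ e * (2⁻¹ : ℝ) ^ k) * M := by
      rw [div_eq_mul_inv, mul_right_comm, ← div_eq_mul_inv,
        ← ENNReal.ofReal_div_of_pos hsepos]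
      congr 2
      have hrs : r / s = 2 := by
        rw [hr, hs]
        field_simp
        ring
      have h1 : r ^ (e + 1) / s ^ e = r * (r / s) ^ e := by ring
      rw [hde, h1, hrs, hr, inv_pow]
      ring
    calc ∫⁻ z in A k, f z / ENNReal.ofReal (‖x - z‖ ^ e)
        ≤ ∫⁻ z in A k, f z / ENNReal.ofReal (s ^ e) := hstep1
      _ = (∫⁻ z in A k, f z) / ENNReal.ofReal (s ^ e) := hstep2
      _ ≤ (ENNReal.ofReal (r ^ d) * M) / ENNReal.ofReal (s ^ e) := hstep3
      _ = ENNReal.ofReal (R * 2 ^ e * (2⁻¹ : ℝ) ^ k) * M := hstep4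
  -- sum the geometric series
  have hsum : ∑' k : ℕ, ENNReal.ofReal (R * 2 ^ e * (2⁻¹ : ℝ) ^ k)
      = ENNReal.ofReal (2 ^ d * R) := by
    rw [← ENNReal.ofReal_tsum_of_nonneg (fun k => by positivity)
      ((summable_geometric_of_lt_one (by norm_num) (by norm_num)).mul_left _)]
    congr 1
    rw [tsum_mul_left, tsum_geometric_of_lt_one (by norm_num) (by norm_num)]
    rw [hde, pow_succ]
    norm_num
    ring
  calc ∫⁻ z in Metric.ball (midpoint ℝ x y) (R / 2),
        f z / ENNReal.ofReal (‖x - z‖ ^ e)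
      ≤ ∫⁻ z in ⋃ k, A k, f z / ENNReal.ofReal (‖x - z‖ ^ e) :=
        lintegral_mono_set hsub
    _ ≤ ∑' k : ℕ, ∫⁻ z in A k, f z / ENNReal.ofReal (‖x - z‖ ^ e) :=
        lintegral_iUnion_le _ _
    _ ≤ ∑' k : ℕ, ENNReal.ofReal (R * 2 ^ e * (2⁻¹ : ℝ) ^ k) * M :=
        ENNReal.tsum_le_tsum hAk
    _ = (∑' k : ℕ, ENNReal.ofReal (R * 2 ^ e * (2⁻¹ : ℝ) ^ k)) * M :=
        ENNReal.tsum_mul_right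
    _ = ENNReal.ofReal (2 ^ d * R) * M := by rw [hsum]
end

section
/- Let n ≥ 2 be an integer and δ = 1/(2n). Let b : ℝ → ℝ be given by b(x) = 1 if x > 0 and b(x) = 0 if x ≤ 0. Define X : ℝ → ℝ by: X(x) = x if x ∈ [k/n, (2k+1)/(2n)] or x ∈ [−(2k+1)/(2n), −k/n] for some integer 1 ≤ k ≤ n−1; X(x) = −x if x ∈ [(2k+1)/(2n), (k+1)/n] or x ∈ [−(k+1)/n, −(2k+1)/(2n)] for some integer 1 ≤ k ≤ n−1; and X(x) = x otherwise. Then X preserves Lebesgue measure, and there exists a universal constant c > 0 (independent of n) such that ∫_{−1}^{1} |b(X(x)) − b(X(x+δ))| / (δ + |X(x) − X(x+δ)|) dx ≥ c·log n. -/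
open MeasureTheory Set
open scoped Classical

/-- The Heaviside field `b(x) = 1` if `x > 0`, `b(x) = 0` if `x ≤ 0`. -/
noncomputable def bstep : ℝ → ℝ := fun x => if 0 < x then 1 else 0

/-- The measure-preserving map of Statement 7, swapping the intervals
`[(2k+1)/(2n), (k+1)/n]` with their mirror images, `1 ≤ k ≤ n-1`. -/
noncomputable def Xmap (n : ℕ) : ℝ → ℝ := fun x =>
  if ∃ k : ℕ, 1 ≤ k ∧ k ≤ n - 1 ∧
      (((k : ℝ) / n ≤ x ∧ x ≤ (2 * k + 1) / (2 * n)) ∨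
        (-((2 * (k : ℝ) + 1) / (2 * n)) ≤ x ∧ x ≤ -((k : ℝ) / n))) then x
  else if ∃ k : ℕ, 1 ≤ k ∧ k ≤ n - 1 ∧
      (((2 * (k : ℝ) + 1) / (2 * n) ≤ x ∧ x ≤ ((k : ℝ) + 1) / n) ∨
        (-(((k : ℝ) + 1) / n) ≤ x ∧ x ≤ -((2 * (k : ℝ) + 1) / (2 * n)))) then -x
  else x

/-! `Xmap n` is negation on a set `S = -S` and the identity off it, so it preserves Lebesgue
measure because negation does. On each interval `(k/n, (2k+1)/(2n))`, `1 ≤ k ≤ n - 1`, the point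
`x > 0` is fixed while `x + δ` lands in the next half-interval and is negated; the sign jumps and
the integrand equals `1 / (2x + 2δ) ≥ n / (4k)`. These intervals have length `δ = 1/(2n)`, so the
integral is at least `∑ 1/(8k) = H_{n-1}/8 ≥ (log n)/8`. -/

open scoped Pointwise

theorem measurePreserving_piecewise_neg {G : Type*} [MeasurableSpace G] [InvolutiveNeg G]
    [MeasurableNeg G] (μ : Measure G) [μ.IsNegInvariant] {s : Set G} [DecidablePred (· ∈ s)]
    (hs : MeasurableSet s) (hs_neg : -s = s) :
    MeasurePreserving (s.piecewise Neg.neg id) μ μ := by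
  have hmeas : Measurable (s.piecewise Neg.neg id) := measurable_neg.piecewise hs measurable_id
  refine ⟨hmeas, Measure.ext fun t ht => ?_⟩
  have hneg : -(t ∩ s) = -t ∩ s := by rw [Set.inter_neg, hs_neg]
  have hdisj : Disjoint (-t ∩ s) (t \ s) := disjoint_sdiff_right.mono_left inter_subset_right
  rw [Measure.map_apply hmeas ht, piecewise_preimage, Set.ite, preimage_id]
  change μ (-t ∩ s ∪ t \ s) = μ t
  rw [measure_union hdisj (ht.diff hs), ← hneg, Measure.measure_neg, measure_inter_add_sdiff t hs]

def symmIccUnion {ι : Type*} (p : ι → Prop) (a b : ι → ℝ) : Set ℝ :=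
  {x | ∃ k, p k ∧ ((a k ≤ x ∧ x ≤ b k) ∨ (-b k ≤ x ∧ x ≤ -a k))}

section symmIccUnion

variable {ι : Type*} (p : ι → Prop) (a b : ι → ℝ)

theorem neg_symmIccUnion : -symmIccUnion p a b = symmIccUnion p a b := by
  ext x
  simp only [symmIccUnion, mem_neg, mem_ofPred_eq, neg_le_neg_iff, le_neg, neg_le, or_comm,
    and_comm]

theorem measurableSet_symmIccUnion [Countable ι] : MeasurableSet (symmIccUnion p a b) := by
  have : symmIccUnion p a b = ⋃ k, ⋃ (_ : p k), Icc (a k) (b k) ∪ Icc (-b k) (-a k) := by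
    ext x
    simp [symmIccUnion]
  rw [this]
  exact .iUnion fun k => .iUnion fun _ => measurableSet_Icc.union measurableSet_Icc

end symmIccUnion

section Xmap

variable (n : ℕ)

def keptSet : Set ℝ :=
  symmIccUnion (fun k : ℕ => 1 ≤ k ∧ k ≤ n - 1) (fun k => k / n) (fun k => (2 * k + 1) / (2 * n))

def negatedSet : Set ℝ :=
  symmIccUnion (fun k : ℕ => 1 ≤ k ∧ k ≤ n - 1) (fun k => (2 * k + 1) / (2 * n))
    (fun k => (k + 1) / n)

theorem Xmap_eq_piecewise : Xmap n = (negatedSet n \ keptSet n).piecewise Neg.neg id := by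
  ext x
  simp only [Xmap, piecewise, mem_sdiff, keptSet, negatedSet, symmIccUnion, mem_ofPred_eq,
    and_assoc]
  split_ifs <;> simp_all

theorem measurePreserving_Xmap : MeasurePreserving (Xmap n) volume volume := by
  rw [Xmap_eq_piecewise]
  refine measurePreserving_piecewise_neg volume
    ((measurableSet_symmIccUnion ..).diff (measurableSet_symmIccUnion ..)) ?_
  change Neg.neg ⁻¹' (negatedSet n \ keptSet n) = _
  rw [preimage_sdiff]
  change -negatedSet n \ -keptSet n = _
  rw [negatedSet, keptSet, neg_symmIccUnion, neg_symmIccUnion]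

end Xmap

theorem abs_bstep_sub_bstep_le_one (x y : ℝ) : |bstep x - bstep y| ≤ 1 := by
  unfold bstep
  split_ifs <;> norm_num

theorem measurable_bstep : Measurable bstep :=
  Measurable.ite measurableSet_Ioi measurable_const measurable_const

noncomputable def jumpQuotient (f : ℝ → ℝ) (δ x : ℝ) : ℝ :=
  |bstep (f x) - bstep (f (x + δ))| / (δ + |f x - f (x + δ)|)

section jumpQuotient

variable {f : ℝ → ℝ} {δ : ℝ}

theorem jumpQuotient_nonneg (hδ : 0 ≤ δ) (x : ℝ) : 0 ≤ jumpQuotient f δ x :=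
  div_nonneg (abs_nonneg _) (add_nonneg hδ (abs_nonneg _))

theorem jumpQuotient_le (hδ : 0 < δ) (x : ℝ) : jumpQuotient f δ x ≤ 1 / δ :=
  div_le_div₀ zero_le_one (abs_bstep_sub_bstep_le_one _ _) hδ
    (le_add_of_nonneg_right (abs_nonneg _))

theorem jumpQuotient_of_pos_of_nonpos {x : ℝ} (hx : 0 < f x) (hxδ : f (x + δ) ≤ 0) :
    jumpQuotient f δ x = 1 / (δ + f x - f (x + δ)) := by
  rw [jumpQuotient, bstep, bstep, if_pos hx, if_neg hxδ.not_gt, sub_zero, abs_one,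
    abs_of_pos (by linarith), add_sub_assoc]

theorem measurable_jumpQuotient (hf : Measurable f) : Measurable (jumpQuotient f δ) := by
  have hfδ : Measurable fun x => f (x + δ) := hf.comp (measurable_add_const δ)
  exact ((measurable_bstep.comp hf).sub (measurable_bstep.comp hfδ)).abs.div
    (measurable_const.add (hf.sub hfδ).abs)

theorem integrableOn_jumpQuotient (hf : Measurable f) (hδ : 0 < δ) {μ : Measure ℝ} {s : Set ℝ}
    (hs : μ s ≠ ⊤) : IntegrableOn (jumpQuotient f δ) s μ :=
  Measure.integrableOn_of_bounded hs (measurable_jumpQuotient hf).aestronglyMeasurable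
    (ae_of_all _ fun x => by
      rw [Real.norm_of_nonneg (jumpQuotient_nonneg hδ.le x)]
      exact jumpQuotient_le hδ x)

end jumpQuotient

section pieces

variable {n k : ℕ}

theorem Xmap_of_mem_Icc (hk : k ∈ Finset.Icc 1 (n - 1)) {x : ℝ}
    (hx : x ∈ Icc ((k : ℝ) / n) ((2 * k + 1) / (2 * n))) : Xmap n x = x :=
  if_pos ⟨k, (Finset.mem_Icc.mp hk).1, (Finset.mem_Icc.mp hk).2, Or.inl hx⟩

theorem Xmap_of_mem_Ioo (hk : k ∈ Finset.Icc 1 (n - 1)) {x : ℝ}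
    (hx : x ∈ Ioo ((2 * (k : ℝ) + 1) / (2 * n)) ((k + 1) / n)) : Xmap n x = -x := by
  obtain ⟨hk₁, hkn⟩ := Finset.mem_Icc.mp hk
  have hn : (0 : ℝ) < n := by exact_mod_cast (by omega : 0 < n)
  have hx₀ : 0 < x := lt_trans (by positivity) hx.1
  have hxl : 2 * k + 1 < 2 * n * x := (div_lt_iff₀' (by positivity)).mp hx.1
  have hxr : n * x < k + 1 := (lt_div_iff₀' hn).mp hx.2
  have hkept : ¬ ∃ j : ℕ, 1 ≤ j ∧ j ≤ n - 1 ∧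
      (((j : ℝ) / n ≤ x ∧ x ≤ (2 * j + 1) / (2 * n)) ∨
        (-((2 * (j : ℝ) + 1) / (2 * n)) ≤ x ∧ x ≤ -((j : ℝ) / n))) := by
    rintro ⟨j, hj₁, -, ⟨hjl, hjr⟩ | ⟨-, hj⟩⟩
    · rw [div_le_iff₀' hn] at hjl
      rw [le_div_iff₀' (by positivity)] at hjr
      have hjk : j < k + 1 := by exact_mod_cast (by linarith : (j : ℝ) < k + 1)
      have hkj : k < j := by exact_mod_cast (by linarith : (k : ℝ) < j)
      omega
    · have : (0 : ℝ) < j / n := by positivity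
      linarith
  exact (if_neg hkept).trans (if_pos ⟨k, hk₁, hkn, Or.inl (Ioo_subset_Icc_self hx)⟩)

theorem le_jumpQuotient_Xmap (hk : k ∈ Finset.Icc 1 (n - 1)) {x : ℝ}
    (hx : x ∈ Ioo ((k : ℝ) / n) ((2 * k + 1) / (2 * n))) :
    (n : ℝ) / (4 * k) ≤ jumpQuotient (Xmap n) (1 / (2 * n)) x := by
  obtain ⟨hk₁, hkn⟩ := Finset.mem_Icc.mp hk
  have hn : (0 : ℝ) < n := by exact_mod_cast (by omega : 0 < n)
  have hk₀ : (1 : ℝ) ≤ k := by exact_mod_cast hk₁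
  have hx₀ : 0 < x := lt_trans (by positivity) hx.1
  have hδ : (0 : ℝ) < 1 / (2 * n) := by positivity
  have hXx : Xmap n x = x := Xmap_of_mem_Icc hk (Ioo_subset_Icc_self hx)
  have hXxδ : Xmap n (x + 1 / (2 * n)) = -(x + 1 / (2 * n)) := by
    have h₁ : (k : ℝ) / n + 1 / (2 * n) = (2 * k + 1) / (2 * n) := by field_simp
    have h₂ : (2 * (k : ℝ) + 1) / (2 * n) + 1 / (2 * n) = (k + 1) / n := by field_simp; ring
    exact Xmap_of_mem_Ioo hk ⟨by linarith [hx.1], by linarith [hx.2]⟩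
  rw [jumpQuotient_of_pos_of_nonpos (by rwa [hXx]) (by rw [hXxδ]; linarith), hXx, hXxδ,
    div_le_div_iff₀ (by positivity) (by linarith)]
  have hx₂ : 2 * n * x < 2 * k + 1 := (lt_div_iff₀' (by positivity)).mp hx.2
  field_simp
  nlinarith

end pieces

section integral

variable {n : ℕ}

theorem one_div_eight_mul_le_setIntegral_jumpQuotient_Xmap {k : ℕ} (hk : k ∈ Finset.Icc 1 (n - 1)) :
    1 / (8 * k) ≤ ∫ x in Ioo ((k : ℝ) / n) ((2 * k + 1) / (2 * n)),
      jumpQuotient (Xmap n) (1 / (2 * n)) x := by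
  obtain ⟨hk₁, hkn⟩ := Finset.mem_Icc.mp hk
  have hn : (0 : ℝ) < n := by exact_mod_cast (by omega : 0 < n)
  have hlen : (2 * (k : ℝ) + 1) / (2 * n) - k / n = 1 / (2 * n) := by field_simp; ring
  have hδ : (0 : ℝ) < 1 / (2 * n) := by positivity
  have h := setIntegral_ge_of_const_le_real measurableSet_Ioo measure_Ioo_lt_top.ne
    (fun x hx => le_jumpQuotient_Xmap hk hx)
    (integrableOn_jumpQuotient (measurePreserving_Xmap n).measurable hδ
      (measure_Ioo_lt_top (μ := volume)).ne)
  rw [Real.volume_real_Ioo_of_le (by linarith), hlen] at h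
  calc 1 / (8 * (k : ℝ)) = n / (4 * k) * (1 / (2 * n)) := by field_simp; ring
    _ ≤ _ := h

theorem log_div_eight_le_integral_jumpQuotient_Xmap (hn : 0 < n) :
    Real.log n / 8 ≤ ∫ x in Icc (-1 : ℝ) 1, jumpQuotient (Xmap n) (1 / (2 * n)) x := by
  have hn' : (0 : ℝ) < n := by exact_mod_cast hn
  have hδ : (0 : ℝ) < 1 / (2 * n) := by positivity
  have hint : ∀ {s : Set ℝ}, volume s ≠ ⊤ → IntegrableOn (jumpQuotient (Xmap n) (1 / (2 * n))) s :=
    integrableOn_jumpQuotient (measurePreserving_Xmap n).measurable hδ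
  set I : ℕ → Set ℝ := fun k => Ioo ((k : ℝ) / n) ((2 * k + 1) / (2 * n))
  have hI_disj : Pairwise (Function.onFun Disjoint I) := by
    -- `I k ⊆ (k/n, (k+1)/n)`, and these intervals are pairwise disjoint.
    refine (Monotone.pairwise_disjoint_on_Ioo_succ (f := fun k : ℕ => (k : ℝ) / n)
      fun i j hij => by simp only; gcongr).mono fun i j h => h.mono ?_ ?_ <;>
    refine Ioo_subset_Ioo_right ?_ <;>
    · rw [Order.succ_eq_add_one, div_le_div_iff₀ (by positivity) hn']
      push_cast
      nlinarith
  have hI_sub : ⋃ k ∈ Finset.Icc 1 (n - 1), I k ⊆ Icc (-1) 1 := by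
    refine iUnion₂_subset fun k hk => ?_
    have hk : (k : ℝ) + 1 ≤ n := by exact_mod_cast (by grind : k + 1 ≤ n)
    refine Ioo_subset_Icc_self.trans (Icc_subset_Icc ?_ ?_)
    · linarith [show 0 ≤ (k : ℝ) / n by positivity]
    · rw [div_le_one (by positivity)]
      linarith
  calc Real.log n / 8 ≤ harmonic (n - 1) / 8 := by
        have h := log_add_one_le_harmonic (n - 1)
        rw [Nat.sub_add_cancel hn] at h
        linarith
    _ = ∑ k ∈ Finset.Icc 1 (n - 1), 1 / (8 * (k : ℝ)) := by
        push_cast [harmonic_eq_sum_Icc]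
        rw [Finset.sum_div]
        refine Finset.sum_congr rfl fun k _ => by ring
    _ ≤ ∑ k ∈ Finset.Icc 1 (n - 1), ∫ x in I k, jumpQuotient (Xmap n) (1 / (2 * n)) x :=
        Finset.sum_le_sum fun k hk => one_div_eight_mul_le_setIntegral_jumpQuotient_Xmap hk
    _ = ∫ x in ⋃ k ∈ Finset.Icc 1 (n - 1), I k, jumpQuotient (Xmap n) (1 / (2 * n)) x :=
        (integral_biUnion_finset _ (fun _ _ => measurableSet_Ioo) (hI_disj.set_pairwise _)
          fun _ _ => hint measure_Ioo_lt_top.ne).symm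
    _ ≤ _ := setIntegral_mono_set (hint measure_Icc_lt_top.ne)
        (ae_of_all _ (jumpQuotient_nonneg hδ.le)) hI_sub.eventuallyLE

end integral

/-- For `n ≥ 2` and `δ = 1/(2n)`, the map `Xmap n` preserves Lebesgue
measure and there exists a universal constant `c > 0`, independent of `n`, such that
`∫_{-1}^{1} |b(X(x)) - b(X(x+δ))| / (δ + |X(x) - X(x+δ)|) dx ≥ c log n`. -/
theorem stmt7 :
    ∃ c > (0 : ℝ), ∀ n : ℕ, 2 ≤ n →
      MeasurePreserving (Xmap n) volume volume ∧
      c * Real.log n ≤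
        ∫ x in Set.Icc (-1 : ℝ) 1,
          |bstep (Xmap n x) - bstep (Xmap n (x + 1 / (2 * n)))| /
            (1 / (2 * n) + |Xmap n x - Xmap n (x + 1 / (2 * n))|) := by
  refine ⟨1 / 8, by norm_num, fun n hn => ⟨measurePreserving_Xmap n, ?_⟩⟩
  rw [one_div_mul_eq_div]
  exact log_div_eight_le_integral_jumpQuotient_Xmap (by omega)
end

section
/- Let T > 0 and let b : ℝ → ℝ be a bounded locally Lipschitz vector field with flow X : [−T,T] × ℝ → ℝ (so ∂_t X(t,x) = b(X(t,x)) and X(0,x) = x). Let φ : [0,∞) → [0,∞) be continuous with φ(ξ) > 0 for ξ > 0, and assume X satisfies the weak compressibility condition: |X(t,I)| ≥ φ(|I|) for every bounded interval I ⊂ ℝ and every t ∈ [−T,T], where |·| denotes Lebesgue measure and X(t,I) the image of I under X(t,·). Then for every t ∈ [−T,T], every x ∈ ℝ and every δ > 0, one has φ(|X(t,x+δ) − X(t,x)|) ≤ δ; consequently, setting ψ(s) = sup{ξ ≥ 0 : φ(ξ) ≤ s}, one has |X(t,x+δ) − X(t,x)| ≤ ψ(δ). -/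
open MeasureTheory Set

/-!
Along the flow, `X (-t)` inverts `X t` (uniqueness for the locally Lipschitz field), and in
dimension one `X t` is strictly increasing: two trajectories whose order flipped would meet at
some intermediate time, again contradicting uniqueness. Hence `X (-t)` maps the interval with
endpoints `X t x ≤ X t (x + δ)` into `[x, x + δ]`, and weak compressibility at time `-t` gives
`φ (X t (x + δ) - X t x) ≤ δ`.
-/

theorem LocallyLipschitz.eq_of_hasDerivAt_of_eq {E : Type*} [NormedAddCommGroup E]
    [NormedSpace ℝ E] {b : E → E} (hb : LocallyLipschitz b) {f g : ℝ → E} {t₀ t₁ : ℝ}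
    (hf : ∀ s ∈ uIcc t₀ t₁, HasDerivAt f (b (f s)) s)
    (hg : ∀ s ∈ uIcc t₀ t₁, HasDerivAt g (b (g s)) s) (h₀ : f t₀ = g t₀) :
    f t₁ = g t₁ := by
  have hfc : ContinuousOn f (uIcc t₀ t₁) := HasDerivAt.continuousOn hf
  have hgc : ContinuousOn g (uIcc t₀ t₁) := HasDerivAt.continuousOn hg
  set S := f '' uIcc t₀ t₁ ∪ g '' uIcc t₀ t₁
  obtain ⟨K, hK⟩ := hb.locallyLipschitzOn.exists_lipschitzOnWith_of_compact (s := S)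
    ((isCompact_uIcc.image_of_continuousOn hfc).union (isCompact_uIcc.image_of_continuousOn hgc))
  have hfS : ∀ s ∈ uIcc t₀ t₁, f s ∈ S := fun s hs => Or.inl (mem_image_of_mem f hs)
  have hgS : ∀ s ∈ uIcc t₀ t₁, g s ∈ S := fun s hs => Or.inr (mem_image_of_mem g hs)
  rcases le_total t₀ t₁ with h | h
  · rw [uIcc_of_le h] at hf hg hfc hgc hfS hgS
    exact ODE_solution_unique_of_mem_Icc_right (v := fun _ => b) (fun _ _ => hK) hfc
      (fun s hs => (hf s (Ico_subset_Icc_self hs)).hasDerivWithinAt)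
      (fun s hs => hfS s (Ico_subset_Icc_self hs)) hgc
      (fun s hs => (hg s (Ico_subset_Icc_self hs)).hasDerivWithinAt)
      (fun s hs => hgS s (Ico_subset_Icc_self hs)) h₀ (right_mem_Icc.2 h)
  · rw [uIcc_of_ge h] at hf hg hfc hgc hfS hgS
    exact ODE_solution_unique_of_mem_Icc_left (v := fun _ => b) (fun _ _ => hK) hfc
      (fun s hs => (hf s (Ioc_subset_Icc_self hs)).hasDerivWithinAt)
      (fun s hs => hfS s (Ioc_subset_Icc_self hs)) hgc
      (fun s hs => (hg s (Ioc_subset_Icc_self hs)).hasDerivWithinAt)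
      (fun s hs => hgS s (Ioc_subset_Icc_self hs)) h₀ (left_mem_Icc.2 h)

structure IsFlowOn (b : ℝ → ℝ) (T : ℝ) (X : ℝ → ℝ → ℝ) : Prop where
  map_zero : ∀ x, X 0 x = x
  hasDerivAt : ∀ x, ∀ t ∈ Icc (-T) T, HasDerivAt (fun s => X s x) (b (X t x)) t

theorem uIcc_zero_subset_Icc_neg {t T : ℝ} (ht : t ∈ Icc (-T) T) : uIcc 0 t ⊆ Icc (-T) T :=
  uIcc_subset_Icc ⟨by linarith [ht.1, ht.2], by linarith [ht.1, ht.2]⟩ ht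

theorem neg_mem_Icc_neg {t T : ℝ} (ht : t ∈ Icc (-T) T) : -t ∈ Icc (-T) T :=
  ⟨neg_le_neg ht.2, neg_le.1 ht.1⟩

namespace IsFlowOn

variable {b : ℝ → ℝ} {T t : ℝ} {X : ℝ → ℝ → ℝ}

theorem neg_apply_apply (hX : IsFlowOn b T X) (hb : LocallyLipschitz b)
    (ht : t ∈ Icc (-T) T) (y : ℝ) : X (-t) (X t y) = y := by
  have hshift : ∀ s ∈ uIcc 0 (-t), t + s ∈ Icc (-T) T := fun s hs => by
    have : t + s ∈ uIcc (t + 0) (t + -t) :=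
      image_const_add_uIcc t 0 (-t) ▸ mem_image_of_mem _ hs
    rw [add_zero, add_neg_cancel, uIcc_comm] at this
    exact uIcc_zero_subset_Icc_neg ht this
  have hsame := hb.eq_of_hasDerivAt_of_eq (f := fun s => X (t + s) y) (g := fun s => X s (X t y))
    (fun s hs => by
      simpa [Function.comp_def] using
        (hX.hasDerivAt y (t + s) (hshift s hs)).comp s ((hasDerivAt_id s).const_add t))
    (fun s hs => hX.hasDerivAt (X t y) s (uIcc_zero_subset_Icc_neg (neg_mem_Icc_neg ht) hs))
    (by simp [hX.map_zero])
  simpa [hX.map_zero] using hsame.symm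

theorem strictMono (hX : IsFlowOn b T X) (hb : LocallyLipschitz b) (ht : t ∈ Icc (-T) T) :
    StrictMono (X t) := by
  intro y₁ y₂ hy
  by_contra! hle
  have hcont : ContinuousOn (fun s => X s y₂ - X s y₁) (uIcc 0 t) :=
    HasDerivAt.continuousOn fun s hs => (hX.hasDerivAt y₂ s (uIcc_zero_subset_Icc_neg ht hs)).sub
      (hX.hasDerivAt y₁ s (uIcc_zero_subset_Icc_neg ht hs))
  have hzero : (0 : ℝ) ∈ uIcc (X 0 y₂ - X 0 y₁) (X t y₂ - X t y₁) := by
    rw [hX.map_zero, hX.map_zero]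
    exact mem_uIcc.2 (Or.inr ⟨by linarith, by linarith⟩)
  obtain ⟨s, hs, hmeet⟩ := intermediate_value_uIcc hcont hzero
  have hs' := uIcc_zero_subset_Icc_neg ht hs
  have : y₂ = y₁ := by
    rw [← hX.neg_apply_apply hb hs' y₂, ← hX.neg_apply_apply hb hs' y₁, sub_eq_zero.1 hmeet]
  exact hy.ne' this

theorem neg_image_Icc_subset (hX : IsFlowOn b T X) (hb : LocallyLipschitz b)
    (ht : t ∈ Icc (-T) T) (x y : ℝ) : X (-t) '' Icc (X t x) (X t y) ⊆ Icc x y := by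
  rintro _ ⟨w, hw, rfl⟩
  have hinv : X t (X (-t) w) = w := by simpa using hX.neg_apply_apply hb (neg_mem_Icc_neg ht) w
  rw [← hinv] at hw
  exact ⟨(hX.strictMono hb ht).le_iff_le.1 hw.1, (hX.strictMono hb ht).le_iff_le.1 hw.2⟩

end IsFlowOn

theorem stmt8_general (T : ℝ) (b : ℝ → ℝ)
    (hblip : LocallyLipschitz b)
    (X : ℝ → ℝ → ℝ) (hX0 : ∀ x, X 0 x = x)
    (hXode : ∀ x, ∀ t ∈ Set.Icc (-T) T, HasDerivAt (fun s => X s x) (b (X t x)) t)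
    (φ : ℝ → ℝ)
    (hweak : ∀ a c : ℝ, a ≤ c → ∀ t ∈ Set.Icc (-T) T,
      φ (c - a) ≤ (volume (X t '' Set.Icc a c)).toReal) :
    ∀ t ∈ Set.Icc (-T) T, ∀ x : ℝ, ∀ δ > (0 : ℝ),
      φ |X t (x + δ) - X t x| ≤ δ ∧
      ENNReal.ofReal |X t (x + δ) - X t x| ≤
        ⨆ (ξ : ℝ) (_ : 0 ≤ ξ ∧ φ ξ ≤ δ), ENNReal.ofReal ξ := by
  intro t ht x δ hδ
  have hX : IsFlowOn b T X := ⟨hX0, hXode⟩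
  have hle : X t x ≤ X t (x + δ) :=
    (hX.strictMono hblip ht).monotone (le_add_of_nonneg_right hδ.le)
  have hφ : φ |X t (x + δ) - X t x| ≤ δ := by
    rw [abs_of_nonneg (sub_nonneg.2 hle)]
    calc φ (X t (x + δ) - X t x)
        ≤ (volume (X (-t) '' Icc (X t x) (X t (x + δ)))).toReal :=
          hweak _ _ hle (-t) (neg_mem_Icc_neg ht)
      _ ≤ (volume (Icc x (x + δ))).toReal :=
          ENNReal.toReal_mono (by simp)
            (measure_mono (hX.neg_image_Icc_subset hblip ht x (x + δ)))
      _ = δ := by simp [hδ.le]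
  exact ⟨hφ, le_iSup₂_of_le _ ⟨abs_nonneg _, hφ⟩ le_rfl⟩

/-- In dimension one, if the flow `X` of a bounded locally Lipschitz
field `b` on `[-T,T]` satisfies the weak compressibility condition `|X(t,I)| ≥ φ(|I|)`
for every bounded interval `I`, then `φ(|X(t,x+δ) - X(t,x)|) ≤ δ` for all `t, x, δ > 0`;
consequently, with `ψ(s) = sup{ξ ≥ 0 : φ(ξ) ≤ s}` (an extended real supremum),
`|X(t,x+δ) - X(t,x)| ≤ ψ(δ)`. -/
theorem stmt8 (T : ℝ) (hT : 0 < T) (b : ℝ → ℝ)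
    (hbbd : ∃ M : ℝ, ∀ x, |b x| ≤ M) (hblip : LocallyLipschitz b)
    (X : ℝ → ℝ → ℝ) (hX0 : ∀ x, X 0 x = x)
    (hXode : ∀ x, ∀ t ∈ Set.Icc (-T) T, HasDerivAt (fun s => X s x) (b (X t x)) t)
    (φ : ℝ → ℝ) (hφc : ContinuousOn φ (Set.Ici 0)) (hφpos : ∀ ξ > (0 : ℝ), 0 < φ ξ)
    (hweak : ∀ a c : ℝ, a ≤ c → ∀ t ∈ Set.Icc (-T) T,
      φ (c - a) ≤ (volume (X t '' Set.Icc a c)).toReal) :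
    ∀ t ∈ Set.Icc (-T) T, ∀ x : ℝ, ∀ δ > (0 : ℝ),
      φ |X t (x + δ) - X t x| ≤ δ ∧
      ENNReal.ofReal |X t (x + δ) - X t x| ≤
        ⨆ (ξ : ℝ) (_ : 0 ≤ ξ ∧ φ ξ ≤ δ), ENNReal.ofReal ξ :=
  stmt8_general T b hblip X hX0 hXode φ hweak
end

section
/- Let T > 0, C₀ ≥ 1, and let b : ℝ^d → ℝ^d with ‖b‖_{L∞} ≤ 2. Let X : [0,T] × ℝ^d → ℝ^d satisfy X(0,x) = x, |X(t,x) − X(s,x)| ≤ 2|t−s| for all s, t ∈ [0,T] and all x, and |{x : X(t,x) ∈ A}| ≤ C₀|A| for every t ∈ [0,T] and Borel set A. Then there is a constant K depending only on d and C₀ such that for every x₀ ∈ ℝ^d and every 0 < r ≤ T: |{x ∈ ℝ^d : ∃ t ∈ [0,T], X(t,x) ∈ B(x₀,r)}| ≤ K T r^{d−1}, where B(x₀,r) is the ball of center x₀ and radius r and |·| is Lebesgue measure. -/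
open MeasureTheory Metric Set

/-! Sample `[0, T]` at the grid times `i r`, `i ≤ ⌊T / r⌋`. A trajectory that meets `B(x₀, r)` at
time `t` is, by the time-Lipschitz bound, within `2r` of its position at the grid time just before
`t`, so it lies in the preimage of `B(x₀, 3r)` at one of these `⌊T / r⌋ + 1` times. Compressibility
bounds each preimage by `C₀ |B(x₀, 3r)| = C₀ ω_d 3^d r^d`, and `(⌊T / r⌋ + 1) r ≤ 2T` since `r ≤ T`. -/

lemma natFloor_div_mul_le {t h : ℝ} (ht : 0 ≤ t) (hh : 0 < h) : (⌊t / h⌋₊ : ℝ) * h ≤ t :=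
  (le_div_iff₀ hh).mp (Nat.floor_le (div_nonneg ht hh.le))

lemma lt_natFloor_div_add_one_mul (t : ℝ) {h : ℝ} (hh : 0 < h) : t < ((⌊t / h⌋₊ : ℝ) + 1) * h :=
  (div_lt_iff₀ hh).mp (Nat.lt_floor_add_one _)

lemma natCast_mul_le_of_le_natFloor_div {i : ℕ} {T h : ℝ} (hT : 0 ≤ T) (hh : 0 < h)
    (hi : i ≤ ⌊T / h⌋₊) : (i : ℝ) * h ≤ T :=
  (mul_le_mul_of_nonneg_right (Nat.cast_le.mpr hi) hh.le).trans (natFloor_div_mul_le hT hh)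

lemma natFloor_div_add_one_mul_le_two_mul {T h : ℝ} (hh : 0 < h) (hhT : h ≤ T) :
    ((⌊T / h⌋₊ : ℝ) + 1) * h ≤ 2 * T := by
  linarith [natFloor_div_mul_le (hh.le.trans hhT) hh]

lemma exists_grid_point_dist_le {α : Type*} [PseudoMetricSpace α] {f : ℝ → α} {L T h t : ℝ}
    (hf : ∀ s ∈ Icc 0 T, ∀ t ∈ Icc 0 T, dist (f t) (f s) ≤ L * |t - s|) (hL : 0 ≤ L)
    (hh : 0 < h) (ht : t ∈ Icc 0 T) :
    ∃ i ≤ ⌊T / h⌋₊, (i : ℝ) * h ∈ Icc 0 T ∧ dist (f (i * h)) (f t) ≤ L * h := by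
  have hle := natFloor_div_mul_le ht.1 hh
  have hlt := lt_natFloor_div_add_one_mul t hh
  have hgrid : (⌊t / h⌋₊ : ℝ) * h ∈ Icc 0 T := ⟨by positivity, hle.trans ht.2⟩
  refine ⟨⌊t / h⌋₊, Nat.floor_le_floor (by gcongr; exact ht.2), hgrid, ?_⟩
  calc dist (f (⌊t / h⌋₊ * h)) (f t) = dist (f t) (f (⌊t / h⌋₊ * h)) := dist_comm _ _
    _ ≤ L * |t - ⌊t / h⌋₊ * h| := hf _ hgrid t ht
    _ ≤ L * h := by
      gcongr
      rw [abs_of_nonneg (by linarith)]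
      linarith

section Trajectories

variable {α E : Type*} [PseudoMetricSpace E] {X : ℝ → α → E} {L T r : ℝ}

lemma setOf_exists_mem_ball_subset_iUnion
    (hX : ∀ x, ∀ s ∈ Icc 0 T, ∀ t ∈ Icc 0 T, dist (X t x) (X s x) ≤ L * |t - s|)
    (hL : 0 ≤ L) (hr : 0 < r) (x₀ : E) :
    {x | ∃ t ∈ Icc 0 T, X t x ∈ ball x₀ r} ⊆
      ⋃ i ∈ Finset.range (⌊T / r⌋₊ + 1), {x | X (i * r) x ∈ ball x₀ ((L + 1) * r)} := by
  rintro x ⟨t, ht, hxt⟩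
  obtain ⟨i, hi, -, hdist⟩ := exists_grid_point_dist_le (hX x) hL hr ht
  simp only [Finset.mem_range, mem_iUnion, mem_ofPred_eq, mem_ball]
  refine ⟨i, Nat.lt_succ_of_le hi, ?_⟩
  calc dist (X (i * r) x) x₀ ≤ dist (X (i * r) x) (X t x) + dist (X t x) x₀ := dist_triangle _ _ _
    _ < L * r + r := add_lt_add_of_le_of_lt hdist (mem_ball.mp hxt)
    _ = (L + 1) * r := by ring

theorem measure_setOf_exists_mem_ball_le [MeasurableSpace α] [MeasurableSpace E]
    [OpensMeasurableSpace E] (μ : Measure α) (ν : Measure E) {C : ENNReal}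
    (hX : ∀ x, ∀ s ∈ Icc 0 T, ∀ t ∈ Icc 0 T, dist (X t x) (X s x) ≤ L * |t - s|)
    (hcomp : ∀ t ∈ Icc 0 T, ∀ A, MeasurableSet A → μ {x | X t x ∈ A} ≤ C * ν A)
    (hL : 0 ≤ L) (hT : 0 ≤ T) (hr : 0 < r) (x₀ : E) :
    μ {x | ∃ t ∈ Icc 0 T, X t x ∈ ball x₀ r} ≤
      (⌊T / r⌋₊ + 1) * (C * ν (ball x₀ ((L + 1) * r))) := by
  calc μ {x | ∃ t ∈ Icc 0 T, X t x ∈ ball x₀ r}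
      ≤ μ (⋃ i ∈ Finset.range (⌊T / r⌋₊ + 1), {x | X (i * r) x ∈ ball x₀ ((L + 1) * r)}) :=
        measure_mono (setOf_exists_mem_ball_subset_iUnion hX hL hr x₀)
    _ ≤ ∑ i ∈ Finset.range (⌊T / r⌋₊ + 1), μ {x | X (i * r) x ∈ ball x₀ ((L + 1) * r)} :=
        measure_biUnion_finset_le _ _
    _ ≤ ∑ _i ∈ Finset.range (⌊T / r⌋₊ + 1), C * ν (ball x₀ ((L + 1) * r)) := by
        refine Finset.sum_le_sum fun i hi => hcomp _ ⟨by positivity, ?_⟩ _ measurableSet_ball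
        exact natCast_mul_le_of_le_natFloor_div hT hr (Nat.lt_succ_iff.mp (Finset.mem_range.mp hi))
    _ = (⌊T / r⌋₊ + 1) * (C * ν (ball x₀ ((L + 1) * r))) := by
        simp

end Trajectories

/-- If `X(0,x) = x`, `X` is `2`-Lipschitz in time, and the upper
compressibility bound `|{x : X t x ∈ A}| ≤ C₀|A|` holds, then there is `K` depending
only on `d` and `C₀` such that for every ball `B(x₀,r)` with `0 < r ≤ T`, the measure of
the set of points whose trajectory meets the ball is at most `K T r^{d-1}`. -/
theorem stmt13 (d : ℕ) (hd : 1 ≤ d) (C₀ : ℝ) (hC₀ : 1 ≤ C₀) :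
    ∃ K > (0 : ℝ), ∀ T : ℝ, 0 < T →
      ∀ b : EuclideanSpace ℝ (Fin d) → EuclideanSpace ℝ (Fin d),
        (∀ x, ‖b x‖ ≤ 2) →
      ∀ X : ℝ → EuclideanSpace ℝ (Fin d) → EuclideanSpace ℝ (Fin d),
        (∀ x, X 0 x = x) →
        (∀ x, ∀ s ∈ Set.Icc (0 : ℝ) T, ∀ t ∈ Set.Icc (0 : ℝ) T,
          ‖X t x - X s x‖ ≤ 2 * |t - s|) →
        (∀ t ∈ Set.Icc (0 : ℝ) T, ∀ A : Set (EuclideanSpace ℝ (Fin d)),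
          MeasurableSet A → volume {x | X t x ∈ A} ≤ ENNReal.ofReal C₀ * volume A) →
        ∀ x₀ : EuclideanSpace ℝ (Fin d), ∀ r : ℝ, 0 < r → r ≤ T →
          volume {x | ∃ t ∈ Set.Icc (0 : ℝ) T, X t x ∈ Metric.ball x₀ r} ≤
            ENNReal.ofReal (K * T * r ^ (d - 1)) := by
  have : Nonempty (Fin d) := Fin.pos_iff_nonempty.mp hd
  set ω : ℝ := √Real.pi ^ d / Real.Gamma (d / 2 + 1)
  have hω : 0 < ω := div_pos (by positivity) (Real.Gamma_pos_of_pos (by positivity))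
  refine ⟨2 * 3 ^ d * C₀ * ω, by positivity, ?_⟩
  intro T hT _ _ X _ hLip hComp x₀ r hr hrT
  have hX : ∀ x, ∀ s ∈ Icc 0 T, ∀ t ∈ Icc 0 T, dist (X t x) (X s x) ≤ 2 * |t - s| := by
    simpa only [dist_eq_norm] using hLip
  have hcount := measure_setOf_exists_mem_ball_le volume volume hX hComp zero_le_two hT.le hr x₀
  have hgrid := natFloor_div_add_one_mul_le_two_mul hr hrT
  refine hcount.trans ?_
  have hN : ((⌊T / r⌋₊ : ENNReal) + 1) = ENNReal.ofReal (⌊T / r⌋₊ + 1) := by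
    rw [ENNReal.ofReal_add (by positivity) zero_le_one, ENNReal.ofReal_natCast, ENNReal.ofReal_one]
  rw [EuclideanSpace.volume_ball, Fintype.card_fin, hN, ← ENNReal.ofReal_pow (by positivity),
    ← ENNReal.ofReal_mul (by positivity), ← ENNReal.ofReal_mul (by positivity),
    ← ENNReal.ofReal_mul (by positivity)]
  refine ENNReal.ofReal_le_ofReal ?_
  rw [mul_pow, ← pow_sub_one_mul (by omega : d ≠ 0) r]
  calc ((⌊T / r⌋₊ : ℝ) + 1) * (C₀ * ((2 + 1) ^ d * (r ^ (d - 1) * r) * ω))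
      = ((⌊T / r⌋₊ + 1) * r) * (3 ^ d * C₀ * ω * r ^ (d - 1)) := by ring
    _ ≤ (2 * T) * (3 ^ d * C₀ * ω * r ^ (d - 1)) := by gcongr
    _ = 2 * 3 ^ d * C₀ * ω * T * r ^ (d - 1) := by ring
end

section
/- Let b ∈ C¹(ℝ²;ℝ²) be bounded with first component satisfying 1 ≤ b₁(x) ≤ 2 for all x ∈ ℝ², and let X : ℝ × ℝ² → ℝ² be the (globally defined) flow of b, i.e. ∂_t X(t,x) = b(X(t,x)), X(0,x) = x. Fix δ ∈ ℝ² and x ∈ ℝ². Then for every t ∈ ℝ there exists a unique real number t_δ(t,x) such that X₁(t_δ(t,x), x) = X₁(t, x+δ), where X₁ denotes the first component of X; moreover the map t ↦ t_δ(t,x) is continuously differentiable and 1/2 ≤ ∂_t t_δ(t,x) ≤ 2 for all t. -/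
/-!
Since `∂ₛ X₁(s, x) = b₁(X(s, x)) ∈ [1, 2]`, the map `s ↦ X₁(s, x)` is a strictly increasing
bijection of `ℝ` (it grows at least linearly), i.e. an order isomorphism `e`. Hence
`t_δ(·, x) = e⁻¹ ∘ X₁(·, x + δ)`, and by the inverse function rule its derivative is
`b₁(X(t, x + δ)) / b₁(X(t_δ, x))`, a continuous quotient of two numbers in `[1, 2]`.
-/

open Filter Set

lemma surjective_of_hasDerivAt_of_le {f f' : ℝ → ℝ} {c : ℝ} (hc : 0 < c)
    (hf : ∀ s, HasDerivAt f (f' s) s) (hf' : ∀ s, c ≤ f' s) : Function.Surjective f := by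
  have hcont : Continuous f := continuous_iff_continuousAt.2 fun s => (hf s).continuousAt
  have hlin : Monotone fun s => f s - (f 0 + c * s) :=
    monotone_of_hasDerivAt_nonneg
      (fun s => (hf s).sub (((hasDerivAt_id' s).const_mul c).const_add (f 0)))
      fun s => by simpa using hf' s
  refine hcont.surjective ?_ ?_
  · refine tendsto_atTop_mono' atTop ?_
      (tendsto_atTop_add_const_left _ (f 0) (tendsto_id.const_mul_atTop hc))
    filter_upwards [eventually_ge_atTop 0] with s hs
    simpa using hlin hs
  · refine tendsto_atBot_mono' atBot ?_
      (tendsto_atBot_add_const_left _ (f 0) (tendsto_id.const_mul_atBot hc))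
    filter_upwards [eventually_le_atBot 0] with s hs
    simpa using hlin hs

lemma exists_orderIso_of_hasDerivAt_of_le {f f' : ℝ → ℝ} {c : ℝ} (hc : 0 < c)
    (hf : ∀ s, HasDerivAt f (f' s) s) (hf' : ∀ s, c ≤ f' s) : ∃ e : ℝ ≃o ℝ, ⇑e = f :=
  ⟨StrictMono.orderIsoOfSurjective f
    (strictMono_of_hasDerivAt_pos hf fun s => hc.trans_le (hf' s))
    (surjective_of_hasDerivAt_of_le hc hf hf'), rfl⟩

lemma OrderIso.hasDerivAt_symm (e : ℝ ≃o ℝ) {f' y : ℝ} (he : HasDerivAt e f' (e.symm y))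
    (hf' : f' ≠ 0) : HasDerivAt e.symm f'⁻¹ y :=
  he.of_local_left_inverse e.symm.continuous.continuousAt hf' (by simp)

lemma OrderIso.hasDerivAt_symm_comp (e : ℝ ≃o ℝ) {f' g g' : ℝ → ℝ}
    (he : ∀ s, HasDerivAt e (f' s) s) (hf' : ∀ s, f' s ≠ 0) (hg : ∀ t, HasDerivAt g (g' t) t)
    (t : ℝ) : HasDerivAt (fun t => e.symm (g t)) (g' t / f' (e.symm (g t))) t := by
  rw [div_eq_inv_mul]
  exact (e.hasDerivAt_symm (he _) (hf' _)).comp t (hg t)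

lemma contDiff_one_of_hasDerivAt {f f' : ℝ → ℝ} (hf : ∀ t, HasDerivAt f (f' t) t)
    (hf' : Continuous f') : ContDiff ℝ 1 f := by
  rw [contDiff_one_iff_deriv, show deriv f = f' from funext fun t => (hf t).deriv]
  exact ⟨fun t => (hf t).differentiableAt, hf'⟩

lemma div_mem_Icc_of_mem_Icc_one_two {a c : ℝ} (ha : a ∈ Icc (1 : ℝ) 2)
    (hc : c ∈ Icc (1 : ℝ) 2) : c / a ∈ Icc (1 / 2 : ℝ) 2 := by
  obtain ⟨ha1, ha2⟩ := ha
  obtain ⟨hc1, hc2⟩ := hc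
  have ha0 : 0 < a := by linarith
  constructor
  · rw [le_div_iff₀ ha0]; linarith
  · rw [div_le_iff₀ ha0]; linarith

theorem stmt14_general (b : EuclideanSpace ℝ (Fin 2) → EuclideanSpace ℝ (Fin 2))
    (hb : ContDiff ℝ 1 b)
    (hb1 : ∀ x, 1 ≤ b x 0 ∧ b x 0 ≤ 2)
    (X : ℝ → EuclideanSpace ℝ (Fin 2) → EuclideanSpace ℝ (Fin 2))
    (hXode : ∀ x t, HasDerivAt (fun s => X s x) (b (X t x)) t)
    (δ x : EuclideanSpace ℝ (Fin 2)) :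
    ∃ τ : ℝ → ℝ,
      (∀ t, X (τ t) x 0 = X t (x + δ) 0) ∧
      (∀ t s, X s x 0 = X t (x + δ) 0 → s = τ t) ∧
      ContDiff ℝ 1 τ ∧
      ∀ t, deriv τ t ∈ Set.Icc (1 / 2 : ℝ) 2 := by
  have hX₁ : ∀ y t, HasDerivAt (fun s => X s y 0) (b (X t y) 0) t := fun y t => by
    -- `EuclideanSpace.proj 0 v` is `v 0` only up to unfolding, hence `exact`.
    exact (EuclideanSpace.proj (0 : Fin 2)).hasFDerivAt.comp_hasDerivAt t (hXode y t)
  have hX₁cont : ∀ y, Continuous fun s => X s y 0 := fun y =>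
    continuous_iff_continuousAt.2 fun s => (hX₁ y s).continuousAt
  have hb₁X : ∀ y, Continuous fun s => b (X s y) 0 := fun y =>
    (PiLp.continuous_apply 2 _ 0).comp <| hb.continuous.comp <|
      continuous_iff_continuousAt.2 fun s => (hXode y s).continuousAt
  have hb₁ne : ∀ y, b y 0 ≠ 0 := fun y => by linarith [(hb1 y).1]
  obtain ⟨e, he⟩ := exists_orderIso_of_hasDerivAt_of_le one_pos (hX₁ x) fun s => (hb1 _).1
  have hfe : ∀ s, X s x 0 = e s := fun s => by rw [he]
  set τ := fun t => e.symm (X t (x + δ) 0)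
  have hτ : ∀ t, HasDerivAt τ (b (X t (x + δ)) 0 / b (X (τ t) x) 0) t :=
    e.hasDerivAt_symm_comp (he ▸ hX₁ x) (fun s => hb₁ne _) (hX₁ (x + δ))
  refine ⟨τ, fun t => by simp [τ, hfe], fun t s hs => ?_, ?_, fun t => ?_⟩
  · rw [hfe] at hs
    simp [τ, ← hs]
  · exact contDiff_one_of_hasDerivAt hτ <|
      (hb₁X (x + δ)).div ((hb₁X x).comp (e.symm.continuous.comp (hX₁cont (x + δ))))
        fun t => hb₁ne _
  · rw [(hτ t).deriv]
    exact div_mem_Icc_of_mem_Icc_one_two (hb1 _) (hb1 _)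

/-- Let `b ∈ C¹(ℝ²;ℝ²)` be bounded with `1 ≤ b₁ ≤ 2` and let `X` be
its global flow. Then for every `δ` and `x` there is a map `t ↦ t_δ(t,x)`, uniquely
characterized by `X₁(t_δ(t,x),x) = X₁(t,x+δ)`, which is `C¹` with derivative in
`[1/2,2]`. -/
theorem stmt14 (b : EuclideanSpace ℝ (Fin 2) → EuclideanSpace ℝ (Fin 2))
    (hb : ContDiff ℝ 1 b) (hbbd : ∃ M : ℝ, ∀ x, ‖b x‖ ≤ M)
    (hb1 : ∀ x, 1 ≤ b x 0 ∧ b x 0 ≤ 2)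
    (X : ℝ → EuclideanSpace ℝ (Fin 2) → EuclideanSpace ℝ (Fin 2))
    (hX0 : ∀ x, X 0 x = x)
    (hXode : ∀ x t, HasDerivAt (fun s => X s x) (b (X t x)) t)
    (δ x : EuclideanSpace ℝ (Fin 2)) :
    ∃ τ : ℝ → ℝ,
      (∀ t, X (τ t) x 0 = X t (x + δ) 0) ∧
      (∀ t s, X s x 0 = X t (x + δ) 0 → s = τ t) ∧
      ContDiff ℝ 1 τ ∧
      ∀ t, deriv τ t ∈ Set.Icc (1 / 2 : ℝ) 2 :=
  stmt14_general b hb hb1 X hXode δ x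
end

section
/- Let g : ℝ → ℝ be differentiable with g'(s) ∈ [1/2, 2] for every s ∈ ℝ. Then for every u ∈ ℝ, every r > 0 and every t > 0: ∫₀^t 1_{min(s, g(s)) ≤ u ≤ max(s, g(s))} / (r + |s − g(s)|) ds ≤ 3. -/
open MeasureTheory Set Filter

/-! Since `g' ≥ 1/2`, the map `g` is an increasing bijection; let `g b = u`. If `u` lies between
`s` and `g s`, then `s` lies between `u` and `b`, and
`|s - g s| = |s - u| + |g b - g s| ≥ |s - u| + |b - s| / 2 ≥ |u - b| / 2`.
So the integrand is at most `(r + |u - b| / 2)⁻¹` on an interval of length `|u - b|` and vanishes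
elsewhere, which bounds the integral by `|u - b| / (r + |u - b| / 2) < 2`. -/

theorem surjective_of_pos_le_deriv {g : ℝ → ℝ} (hg : Differentiable ℝ g) {c : ℝ} (hc : 0 < c)
    (hg' : ∀ x, c ≤ deriv g x) : Function.Surjective g := by
  have hlow := mul_sub_le_image_sub_of_le_deriv hg hg'
  refine hg.continuous.surjective
    (tendsto_atTop_mono' _ ?_ (tendsto_atTop_add_const_left _ (g 0) (tendsto_id.const_mul_atTop hc)))
    (tendsto_atBot_mono' _ ?_ (tendsto_atBot_add_const_left _ (g 0) (tendsto_id.const_mul_atBot hc)))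
  · filter_upwards [eventually_ge_atTop 0] with x hx
    rw [id]
    linarith [hlow hx]
  · filter_upwards [eventually_le_atBot 0] with x hx
    rw [id]
    linarith [hlow hx]

theorem abs_sub_add_abs_sub_of_mem_uIcc {a b c : ℝ} (h : b ∈ uIcc a c) :
    |a - b| + |b - c| = |a - c| := by
  have := dist_add_dist_of_mem_segment (x := a) (z := c) (by rwa [segment_eq_uIcc])
  simpa only [Real.dist_eq] using this

theorem mul_abs_sub_le_abs_sub_apply {g : ℝ → ℝ} {c : ℝ}
    (hlow : ∀ ⦃x y⦄, x ≤ y → c * (y - x) ≤ g y - g x) (x y : ℝ) :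
    c * |x - y| ≤ |g x - g y| := by
  rcases le_total x y with h | h
  · rw [abs_sub_comm, abs_sub_comm (g x), abs_of_nonneg (sub_nonneg.2 h)]
    exact (hlow h).trans (le_abs_self _)
  · rw [abs_of_nonneg (sub_nonneg.2 h)]
    exact (hlow h).trans (le_abs_self _)

theorem mul_abs_sub_le_abs_sub_of_mem_uIcc {g : ℝ → ℝ} {c : ℝ} (hc₀ : 0 ≤ c) (hc₁ : c ≤ 1)
    (hlow : ∀ ⦃x y⦄, x ≤ y → c * (y - x) ≤ g y - g x) {b s : ℝ} (hs : g b ∈ uIcc s (g s)) :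
    c * |g b - b| ≤ |s - g s| := by
  have htri : |g b - b| ≤ |g b - s| + |s - b| := abs_sub_le _ _ _
  have hgs := mul_abs_sub_le_abs_sub_apply hlow s b
  rw [← abs_sub_add_abs_sub_of_mem_uIcc hs, abs_sub_comm s (g b), abs_sub_comm (g b) (g s)]
  nlinarith [mul_le_mul_of_nonneg_left htri hc₀,
    mul_le_mul_of_nonneg_right hc₁ (abs_nonneg (g b - s))]

theorem mem_uIcc_of_apply_mem_uIcc {α : Type*} [LinearOrder α] {g : α → α} (hg : StrictMono g)
    {b s : α} (hs : g b ∈ uIcc s (g s)) : s ∈ uIcc (g b) b := by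
  rw [mem_uIcc] at hs ⊢
  rcases hs with ⟨hsu, hug⟩ | ⟨hgu, hus⟩
  · exact Or.inr ⟨hg.le_iff_le.1 hug, hsu⟩
  · exact Or.inl ⟨hus, hg.le_iff_le.1 hgu⟩

theorem setIntegral_le_of_le_indicator_uIcc {f : ℝ → ℝ} {a b M : ℝ}
    (hf : AEStronglyMeasurable f) (hf₀ : ∀ x, 0 ≤ f x)
    (hfM : ∀ x, f x ≤ (uIcc a b).indicator (fun _ => M) x) (s : Set ℝ) :
    ∫ x in s, f x ≤ |b - a| * M := by
  have hM : Integrable ((uIcc a b).indicator fun _ => M) :=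
    (integrable_indicator_iff measurableSet_uIcc).2 (integrableOn_const measure_Icc_lt_top.ne)
  have hfi : Integrable f := hM.mono' hf (.of_forall fun x => by
    rw [Real.norm_of_nonneg (hf₀ x)]
    exact hfM x)
  calc ∫ x in s, f x ≤ ∫ x, f x := setIntegral_le_integral hfi (.of_forall hf₀)
    _ ≤ ∫ x, (uIcc a b).indicator (fun _ => M) x := integral_mono hfi hM hfM
    _ = |b - a| * M := by
      rw [integral_indicator_const _ measurableSet_uIcc, Real.volume_real_interval, smul_eq_mul]

theorem stmt15_general (g : ℝ → ℝ) (hg : Differentiable ℝ g)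
    (hg' : ∀ s, deriv g s ∈ Set.Icc (1 / 2 : ℝ) 2)
    (u r t : ℝ) (hr : 0 < r) :
    ∫ s in Set.Ioc (0 : ℝ) t,
        (if min s (g s) ≤ u ∧ u ≤ max s (g s) then (r + |s - g s|)⁻¹ else 0) ≤ 3 := by
  obtain ⟨b, rfl⟩ := surjective_of_pos_le_deriv hg one_half_pos (fun x => (hg' x).1) u
  have hmono : StrictMono g := strictMono_of_deriv_pos fun x => one_half_pos.trans_le (hg' x).1
  have hlow := mul_sub_le_image_sub_of_le_deriv hg fun x => (hg' x).1
  have hrb : 0 < r + |g b - b| / 2 := by positivity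
  calc _ ≤ |b - g b| * (r + |g b - b| / 2)⁻¹ := setIntegral_le_of_le_indicator_uIcc ?_ ?_ ?_ _
    _ ≤ 3 := by
      rw [abs_sub_comm, ← div_eq_mul_inv, div_le_iff₀ hrb]
      linarith
  · have hgm : Measurable g := hg.continuous.measurable
    refine (Measurable.ite ?_ (by fun_prop) measurable_const).aestronglyMeasurable
    exact (measurableSet_le (measurable_id.min hgm) measurable_const).inter
      (measurableSet_le measurable_const (measurable_id.max hgm))
  · intro s
    split_ifs <;> positivity
  · intro s
    split_ifs with hs
    · rw [indicator_of_mem (mem_uIcc_of_apply_mem_uIcc hmono hs)]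
      refine inv_anti₀ hrb ?_
      linarith [mul_abs_sub_le_abs_sub_of_mem_uIcc (by norm_num) (by norm_num) hlow hs]
    · exact indicator_nonneg (fun _ _ => inv_nonneg.2 hrb.le) s

/-- If `g : ℝ → ℝ` is differentiable with `g' ∈ [1/2, 2]` everywhere,
then for every `u ∈ ℝ`, `r > 0` and `t > 0`,
`∫₀^t 1_{min(s,g(s)) ≤ u ≤ max(s,g(s))} / (r + |s - g(s)|) ds ≤ 3`. -/
theorem stmt15 (g : ℝ → ℝ) (hg : Differentiable ℝ g)
    (hg' : ∀ s, deriv g s ∈ Set.Icc (1 / 2 : ℝ) 2)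
    (u r t : ℝ) (hr : 0 < r) (ht : 0 < t) :
    ∫ s in Set.Ioc (0 : ℝ) t,
        (if min s (g s) ≤ u ∧ u ≤ max s (g s) then (r + |s - g s|)⁻¹ else 0) ≤ 3 :=
  stmt15_general g hg hg' u r t hr
end
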